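/- arXiv:2301.09944 — 2 statements merged into one kernel-verified Lean document; each statement's English description precedes it below -/
import Mathlib

section
/- Let S be a Clifford semigroup, s a solution on S, and a,b ∈ S with a ≤ b. Then θ_a(b·b⁻¹) is an idempotent, θ_a(b·b⁻¹) = θ_a(b)·(θ_a(b))⁻¹, and (θ_a(b))⁻¹ = θ_{a·b}(b⁻¹). -/
/-!
Put `x = θ_a(b)` and `y = θ_{ab}(b⁻¹)`. Since `a ≤ b` forces `a·b·b⁻¹ = a` (idempotents are
central), four instances of (P1) give `θ_a(b·b⁻¹) = x·y`, `θ_a(b·b⁻¹)·x = x`,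
`y·x = θ_{ab}(b⁻¹·b)` and `θ_{ab}(b⁻¹·b)·y = y`, so `x·y·x = x` and `y·x·y = y`: `y` is a
semigroup inverse of `x`. Inverses are unique once idempotents commute, so `y = x⁻¹`, and
`θ_a(b·b⁻¹) = x·x⁻¹` is idempotent.
-/

section InverseSemigroup

variable {S : Type*} [Semigroup S]

def IsSemigroupInverse (x y : S) : Prop :=
  x * y * x = x ∧ y * x * y = y

theorem IsSemigroupInverse.isIdempotentElem_mul {x y : S} (h : IsSemigroupInverse x y) :
    IsIdempotentElem (x * y) := by
  rw [IsIdempotentElem, ← mul_assoc, h.1]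

theorem IsSemigroupInverse.symm {x y : S} (h : IsSemigroupInverse x y) : IsSemigroupInverse y x :=
  And.symm h

theorem IsSemigroupInverse.eq
    (hcomm : ∀ e f : S, IsIdempotentElem e → IsIdempotentElem f → e * f = f * e)
    {x y z : S} (hy : IsSemigroupInverse x y) (hz : IsSemigroupInverse x z) : y = z := by
  have hyx : IsIdempotentElem (y * x) := hy.symm.isIdempotentElem_mul
  have hzx : IsIdempotentElem (z * x) := hz.symm.isIdempotentElem_mul
  have hxy : IsIdempotentElem (x * y) := hy.isIdempotentElem_mul
  have hxz : IsIdempotentElem (x * z) := hz.isIdempotentElem_mul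
  have hy_eq : y = z * x * y :=
    calc y = y * (x * z * x) * y := by rw [hz.1, hy.2]
      _ = y * x * (z * x) * y := by simp only [mul_assoc]
      _ = z * x * (y * x) * y := by rw [hcomm _ _ hyx hzx]
      _ = z * x * (y * x * y) := by simp only [mul_assoc]
      _ = z * x * y := by rw [hy.2]
  have hz_eq : z = z * x * y :=
    calc z = z * (x * y * x) * z := by rw [hy.1, hz.2]
      _ = z * (x * y * (x * z)) := by simp only [mul_assoc]
      _ = z * (x * z * (x * y)) := by rw [hcomm _ _ hxy hxz]
      _ = z * x * z * x * y := by simp only [mul_assoc]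
      _ = z * x * y := by rw [hz.2]
  exact hy_eq.trans hz_eq.symm

end InverseSemigroup

section Clifford

variable {S : Type*} [Semigroup S] (inv : S → S)
  (hinv1 : ∀ a : S, a * inv a * a = a)
  (hcentral : ∀ e : S, e * e = e → ∀ a : S, e * a = a * e)

include hinv1 in
theorem isIdempotentElem_mul_inv (b : S) : IsIdempotentElem (b * inv b) := by
  rw [IsIdempotentElem, ← mul_assoc, hinv1]

include hinv1 hcentral in
theorem mul_mul_inv_eq_of_le {a b : S} (hle : a * inv a = a * inv a * (b * inv b)) :
    a * (b * inv b) = a := by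
  have he := hcentral _ (isIdempotentElem_mul_inv inv hinv1 b)
  have ha := hcentral _ (isIdempotentElem_mul_inv inv hinv1 a)
  calc a * (b * inv b) = b * inv b * (a * inv a * a) := by rw [hinv1, he]
    _ = a * inv a * (b * inv b) * a := by rw [← mul_assoc, ha]
    _ = a := by rw [← hle, hinv1]

include hinv1 hcentral in
theorem isSemigroupInverse_theta_of_le (hinv2 : ∀ a : S, inv a * a * inv a = inv a)
    (θ : S → S → S) (P1 : ∀ a b c : S, θ a b * θ (a * b) c = θ a (b * c))
    {a b : S} (hle : a * inv a = a * inv a * (b * inv b)) :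
    IsSemigroupInverse (θ a b) (θ (a * b) (inv b)) := by
  have hae : a * (b * inv b) = a := mul_mul_inv_eq_of_le inv hinv1 hcentral hle
  have hxy : θ a b * θ (a * b) (inv b) = θ a (b * inv b) := P1 a b (inv b)
  have hux : θ a (b * inv b) * θ a b = θ a b := by
    simpa only [hae, hinv1] using P1 a (b * inv b) b
  have hyx : θ (a * b) (inv b) * θ a b = θ (a * b) (inv b * b) := by
    simpa only [mul_assoc, hae] using P1 (a * b) (inv b) b
  have hvy : θ (a * b) (inv b * b) * θ (a * b) (inv b) = θ (a * b) (inv b) := by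
    have h := P1 (a * b) (inv b * b) (inv b)
    rwa [← mul_assoc, mul_assoc a b, hae, hinv2] at h
  exact ⟨by rw [hxy, hux], by rw [hyx, hvy]⟩

end Clifford

theorem pentagon_clifford_theta_of_le_general
    {S : Type*} [Semigroup S] (inv : S → S)
    (hinv1 : ∀ a : S, a * inv a * a = a)
    (hinv2 : ∀ a : S, inv a * a * inv a = inv a)
    (hcentral : ∀ e : S, e * e = e → ∀ a : S, e * a = a * e)
    (θ : S → S → S)
    (P1 : ∀ a b c : S, θ a b * θ (a * b) c = θ a (b * c))
    (a b : S) (hle : a * inv a = a * inv a * (b * inv b)) :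
    θ a (b * inv b) * θ a (b * inv b) = θ a (b * inv b) ∧
    θ a (b * inv b) = θ a b * inv (θ a b) ∧
    inv (θ a b) = θ (a * b) (inv b) := by
  have hinverse := isSemigroupInverse_theta_of_le inv hinv1 hcentral hinv2 θ P1 hle
  have hcomm : ∀ e f : S, IsIdempotentElem e → IsIdempotentElem f → e * f = f * e :=
    fun e f he _ => hcentral e he f
  have hinv_eq : inv (θ a b) = θ (a * b) (inv b) :=
    IsSemigroupInverse.eq hcomm ⟨hinv1 _, hinv2 _⟩ hinverse
  have hxy : θ a b * inv (θ a b) = θ a (b * inv b) := by rw [hinv_eq, P1]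
  exact ⟨hxy ▸ (isIdempotentElem_mul_inv inv hinv1 _).eq, hxy.symm, hinv_eq⟩

/-- Clifford semigroup: semigroup with inversion `inv` such that
`a * inv a * a = a`, `inv a * a * inv a = inv a`, `a * inv a = inv a * a`,
and every idempotent is central.
A solution of the pentagon equation is given by `θ` satisfying (P1) and (P2). -/
theorem pentagon_clifford_theta_of_le
    {S : Type*} [Semigroup S] (inv : S → S)
    (hinv1 : ∀ a : S, a * inv a * a = a)
    (hinv2 : ∀ a : S, inv a * a * inv a = inv a)
    (hinvcomm : ∀ a : S, a * inv a = inv a * a)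
    (hcentral : ∀ e : S, e * e = e → ∀ a : S, e * a = a * e)
    (θ : S → S → S)
    (P1 : ∀ a b c : S, θ a b * θ (a * b) c = θ a (b * c))
    (P2 : ∀ a b c : S, θ (θ a b) (θ (a * b) c) = θ b c)
    (a b : S) (hle : a * inv a = a * inv a * (b * inv b)) :
    θ a (b * inv b) * θ a (b * inv b) = θ a (b * inv b) ∧
    θ a (b * inv b) = θ a b * inv (θ a b) ∧
    inv (θ a b) = θ (a * b) (inv b) :=
  pentagon_clifford_theta_of_le_general inv hinv1 hinv2 hcentral θ P1 a b hle
end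

section
/- Let S be a Clifford semigroup and s an idempotent-invariant solution on S with kernel K. Then K = {a ∈ S : θ_e(a) ∈ E(S) for every e ∈ E(S)}, and moreover, for every a ∈ S and e ∈ E(S), if a·e ∈ K then a ∈ K. -/
/-! Writing `a = (a a⁻¹) a`, (P1) and idempotent-invariance give
`θ_g(a) = θ_g(g) θ_{g a a⁻¹}(a)` for every idempotent `g`. Here `g a a⁻¹ ≤ a`, and `θ_g(g)` is
idempotent by (P1), so for `a ∈ K` the element `θ_g(a)` is a product of two central idempotents.
Similarly `θ_g(a e) = θ_g(a) θ_{g a}(e) = θ_g(a) θ_{g a}(a⁻¹ a) = θ_g(a a⁻¹ a) = θ_g(a)`,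
so `a e` and `a` have the same images under every `θ_g`. -/

def InKernel {S : Type*} [Semigroup S] (inv : S → S) (θ : S → S → S) (a : S) : Prop :=
  ∀ e : S, e * e = e → e = e * a * inv a → θ e a * θ e a = θ e a

section Semigroup

variable {S : Type*} [Semigroup S]

theorem isIdempotentElem_mul_of_mul_mul_self {a b : S} (h : a * b * a = a) :
    IsIdempotentElem (a * b) := by
  rw [IsIdempotentElem, ← mul_assoc, h]

theorem isIdempotentElem_mul_of_mul_mul_self' {a b : S} (h : a * b * a = a) :
    IsIdempotentElem (b * a) := by
  rw [IsIdempotentElem, mul_assoc, ← mul_assoc a, h]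

theorem isIdempotentElem_theta_self {θ : S → S → S}
    (P1 : ∀ a b c : S, θ a b * θ (a * b) c = θ a (b * c)) {g : S} (hg : IsIdempotentElem g) :
    IsIdempotentElem (θ g g) := by
  have h := P1 g g g
  rwa [hg.eq] at h

theorem theta_idempotent_mul {θ : S → S → S}
    (P1 : ∀ a b c : S, θ a b * θ (a * b) c = θ a (b * c))
    (hEinv : ∀ a e f : S, IsIdempotentElem e → IsIdempotentElem f → θ a e = θ a f)
    {g f : S} (hg : IsIdempotentElem g) (hf : IsIdempotentElem f) (a : S) :
    θ g (f * a) = θ g g * θ (g * f) a := by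
  rw [hEinv g g f hg hf, P1]

theorem theta_mul_idempotent {θ : S → S → S}
    (P1 : ∀ a b c : S, θ a b * θ (a * b) c = θ a (b * c))
    (hEinv : ∀ a e f : S, IsIdempotentElem e → IsIdempotentElem f → θ a e = θ a f)
    {a b e : S} (hab : a * b = a) (hb : IsIdempotentElem b) (he : IsIdempotentElem e) (g : S) :
    θ g (a * e) = θ g a := by
  rw [← P1, hEinv (g * a) e b he hb, P1, hab]

theorem inKernel_iff {inv : S → S} (hinv : ∀ a : S, a * inv a * a = a)
    (hcentral : ∀ e : S, IsIdempotentElem e → ∀ a : S, Commute e a) {θ : S → S → S}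
    (P1 : ∀ a b c : S, θ a b * θ (a * b) c = θ a (b * c))
    (hEinv : ∀ a e f : S, IsIdempotentElem e → IsIdempotentElem f → θ a e = θ a f) {a : S} :
    InKernel inv θ a ↔ ∀ g : S, IsIdempotentElem g → IsIdempotentElem (θ g a) := by
  refine ⟨fun hker g hg => ?_, fun h g hg _ => h g hg⟩
  have hf : IsIdempotentElem (a * inv a) := isIdempotentElem_mul_of_mul_mul_self (hinv a)
  have hgf : IsIdempotentElem (g * (a * inv a)) := hg.mul_of_commute (hcentral g hg _) hf
  have hgf_le : g * (a * inv a) = g * (a * inv a) * a * inv a := by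
    rw [mul_assoc g _ a, hinv, mul_assoc]
  have hθg := isIdempotentElem_theta_self P1 hg
  have hsplit := theta_idempotent_mul P1 hEinv hg hf a
  rw [hinv] at hsplit
  rw [hsplit]
  exact hθg.mul_of_commute (hcentral _ hθg _) (hker _ hgf hgf_le)

end Semigroup

theorem pentagon_clifford_idempotent_invariant_kernel_general
    {S : Type*} [Semigroup S] (inv : S → S)
    (hinv1 : ∀ a : S, a * inv a * a = a)
    (hcentral : ∀ e : S, e * e = e → ∀ a : S, e * a = a * e)
    (θ : S → S → S)
    (P1 : ∀ a b c : S, θ a b * θ (a * b) c = θ a (b * c))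
    (hEinv : ∀ a e f : S, e * e = e → f * f = f → θ a e = θ a f) :
    ({a : S | InKernel inv θ a} =
      {a : S | ∀ e : S, e * e = e → θ e a * θ e a = θ e a}) ∧
    (∀ a e : S, e * e = e → InKernel inv θ (a * e) → InKernel inv θ a) := by
  have hK : ∀ {a : S}, InKernel inv θ a ↔ ∀ g : S, IsIdempotentElem g → IsIdempotentElem (θ g a) :=
    inKernel_iff hinv1 hcentral P1 hEinv
  refine ⟨Set.ext fun a => hK, fun a e he hker => hK.2 fun g hg => ?_⟩
  have ha : a * (inv a * a) = a := by rw [← mul_assoc, hinv1]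
  rw [← theta_mul_idempotent P1 hEinv ha (isIdempotentElem_mul_of_mul_mul_self' (hinv1 a)) he g]
  exact hK.1 hker g hg

theorem pentagon_clifford_idempotent_invariant_kernel
    {S : Type*} [Semigroup S] (inv : S → S)
    (hinv1 : ∀ a : S, a * inv a * a = a)
    (hinv2 : ∀ a : S, inv a * a * inv a = inv a)
    (hinvcomm : ∀ a : S, a * inv a = inv a * a)
    (hcentral : ∀ e : S, e * e = e → ∀ a : S, e * a = a * e)
    (θ : S → S → S)
    (P1 : ∀ a b c : S, θ a b * θ (a * b) c = θ a (b * c))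
    (P2 : ∀ a b c : S, θ (θ a b) (θ (a * b) c) = θ b c)
    (hEinv : ∀ a e f : S, e * e = e → f * f = f → θ a e = θ a f) :
    ({a : S | InKernel inv θ a} =
      {a : S | ∀ e : S, e * e = e → θ e a * θ e a = θ e a}) ∧
    (∀ a e : S, e * e = e → InKernel inv θ (a * e) → InKernel inv θ a) :=
  pentagon_clifford_idempotent_invariant_kernel_general inv hinv1 hcentral θ P1 hEinv
end
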